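/- arXiv:2603.09514 — 2 statements merged into one kernel-verified Lean document; each statement's English description precedes it below -/
import Mathlib

section
/- Let G be a finite tree. Then the Szeged index of G equals the Wiener index of G: ∑_{{u,v} ∈ E(G)} n(u,v)·n(v,u) = ∑_{{u,v} ⊆ V(G)} d(u,v). -/
/-!
Double counting: `n(u,v) · n(v,u)` counts the pairs `(x, y)` with `x` strictly closer to `u` and
`y` strictly closer to `v`, so after exchanging the sums it remains to see that for fixed `x, y`
there are `d(x, y)` such adjacent pairs `(u, v)`. They are exactly the darts of a shortest walk
from `x` to `y`: every dart of a geodesic has this property in any graph, and conversely each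
edge of an acyclic graph is a bridge, which every walk from the side of `u` to the side of `v`
must cross.
-/

/-- `nCloser G s t` is the number of vertices strictly closer to `s` than to `t`. -/
noncomputable def nCloser {V : Type*} (G : SimpleGraph V) (s t : V) : ℕ :=
  Nat.card {v : V | G.dist v s < G.dist v t}

open Finset

namespace SimpleGraph

variable {V : Type*} {G : SimpleGraph V} {u v x y : V}

theorem Walk.dist_snd_eq_dist_fst_add_one_of_mem_darts {p : G.Walk x y}
    (hp : p.length = G.dist x y) {d : G.Dart} (hd : d ∈ p.darts) :
    G.dist x d.snd = G.dist x d.fst + 1 := by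
  obtain ⟨p₁, p₂, rfl⟩ := (isSubwalk_toWalk_adj_iff_mem_darts p).mpr hd
  have h₁ := length_eq_dist_of_subwalk hp (p₂ := p₁)
    ⟨nil, d.adj.toWalk.append p₂, by rw [append_assoc]; rfl⟩
  have h₂ := length_eq_dist_of_subwalk hp (p₂ := p₁.concat d.adj)
    ⟨nil, p₂, by rw [concat_eq_append]; rfl⟩
  rw [← h₁, ← h₂, length_concat]

theorem Walk.dist_fst_eq_dist_snd_add_one_of_mem_darts {p : G.Walk x y}
    (hp : p.length = G.dist x y) {d : G.Dart} (hd : d ∈ p.darts) :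
    G.dist y d.fst = G.dist y d.snd + 1 :=
  p.reverse.dist_snd_eq_dist_fst_add_one_of_mem_darts (d := d.symm)
    (by rw [length_reverse, hp, dist_comm]) (mem_darts_reverse.mpr <| by rwa [Dart.symm_symm])

theorem reachable_deleteEdges_of_dist_lt (huv : G.Adj u v) (hx : G.dist x u < G.dist x v) :
    (G.deleteEdges {s(u, v)}).Reachable x u := by
  classical
  have hxu : G.Reachable x u := (Reachable.of_dist_ne_zero (by omega)).trans huv.symm.reachable
  obtain ⟨q, hq⟩ := hxu.exists_walk_length_eq_dist
  refine reachable_deleteEdges_iff_exists_walk.mpr ⟨q, fun he => ?_⟩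
  have hv := q.snd_mem_support_of_mem_edges he
  have := G.dist_le (q.takeUntil v hv)
  have := q.length_takeUntil_le_length hv
  omega

theorem IsBridge.mem_edges_of_dist_lt (hb : G.IsBridge s(u, v)) (huv : G.Adj u v)
    (hx : G.dist x u < G.dist x v) (hy : G.dist y v < G.dist y u) (p : G.Walk x y) :
    s(u, v) ∈ p.edges := by
  by_contra he
  have hyv := reachable_deleteEdges_of_dist_lt huv.symm hy
  rw [Sym2.eq_swap] at hyv
  exact isBridge_iff.mp hb <| ((reachable_deleteEdges_of_dist_lt huv hx).symm.trans
    (reachable_deleteEdges_iff_exists_walk.mpr ⟨p, he⟩)).trans hyv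

section Fintype

variable [Fintype V] [DecidableRel G.Adj]

variable (G) in
noncomputable def separatingPairs (x y : V) : Finset (V × V) :=
  {uv | G.Adj uv.1 uv.2 ∧ G.dist x uv.1 < G.dist x uv.2 ∧ G.dist y uv.2 < G.dist y uv.1}

theorem IsAcyclic.card_separatingPairs (hG : G.IsAcyclic) (x y : V) :
    #(G.separatingPairs x y) = G.dist x y := by
  classical
  by_cases hxy : G.Reachable x y
  swap
  -- `dist` is `0` between components, and no pair separates vertices of different components.
  · rw [dist_eq_zero_of_not_reachable hxy, card_eq_zero, separatingPairs, filter_eq_empty_iff]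
    rintro ⟨u, v⟩ - ⟨huv, hx, hy⟩
    dsimp only at huv hx hy
    exact hxy <| ((Reachable.of_dist_ne_zero (by omega)).trans huv.symm.reachable).trans
      (Reachable.of_dist_ne_zero (by omega : G.dist y u ≠ 0)).symm
  obtain ⟨p, hp⟩ := hxy.exists_walk_length_eq_dist
  have hdarts : p.darts.Nodup :=
    Walk.darts_nodup_of_support_nodup (p.isPath_of_length_eq_dist hp).support_nodup
  suffices h : G.separatingPairs x y = (p.darts.map Dart.toProd).toFinset by
    rw [h, List.toFinset_card_of_nodup (hdarts.map Dart.toProd_injective), List.length_map,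
      Walk.length_darts, hp]
  ext ⟨u, v⟩
  simp only [separatingPairs, mem_filter, mem_univ, true_and, List.mem_toFinset, List.mem_map]
  constructor
  · rintro ⟨huv, hx, hy⟩
    have he := (isAcyclic_iff_forall_adj_isBridge.mp hG huv).mem_edges_of_dist_lt huv hx hy p
    obtain ⟨d, hd, hde⟩ := List.mem_map.mp he
    refine ⟨d, hd, (dart_edge_eq_mk'_iff.mp hde).resolve_right fun hvu => ?_⟩
    have := p.dist_snd_eq_dist_fst_add_one_of_mem_darts hp hd
    simp only [hvu] at this
    omega
  · rintro ⟨⟨⟨a, b⟩, hab⟩, hd, ⟨⟩⟩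
    have hx := p.dist_snd_eq_dist_fst_add_one_of_mem_darts hp hd
    have hy := p.dist_fst_eq_dist_snd_add_one_of_mem_darts hp hd
    dsimp only at hx hy
    exact ⟨hab, by omega, by omega⟩

end Fintype

end SimpleGraph

open SimpleGraph

theorem nCloser_eq_card {V : Type*} [Fintype V] (G : SimpleGraph V) (s t : V) :
    nCloser G s t = #{v | G.dist v s < G.dist v t} := by
  rw [nCloser, Nat.card_eq_fintype_card, Fintype.card_subtype]
  rfl

theorem ite_adj_nCloser_mul_nCloser_eq_sum {V : Type*} [Fintype V] (G : SimpleGraph V)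
    [DecidableRel G.Adj] (u v : V) :
    (if G.Adj u v then nCloser G u v * nCloser G v u else 0) =
      ∑ xy : V × V,
        if G.Adj u v ∧ G.dist xy.1 u < G.dist xy.1 v ∧ G.dist xy.2 v < G.dist xy.2 u then 1
        else 0 := by
  rw [Fintype.sum_prod_type]
  by_cases huv : G.Adj u v
  · simp only [huv, if_true, true_and, nCloser_eq_card, card_filter, sum_mul_sum,
      ite_zero_mul_ite_zero, mul_one]
  · simp [huv]

/-- Both sides sum over ordered pairs, so each edge and each unordered pair of vertices is
counted twice. -/
theorem szeged_eq_wiener_of_tree_general {V : Type*} [Fintype V] (G : SimpleGraph V)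
    [DecidableRel G.Adj] (hacyc : G.IsAcyclic) :
    (∑ u : V, ∑ v : V, if G.Adj u v then nCloser G u v * nCloser G v u else 0)
      = ∑ u : V, ∑ v : V, G.dist u v := by
  calc (∑ u : V, ∑ v : V, if G.Adj u v then nCloser G u v * nCloser G v u else 0)
      = ∑ uv : V × V, ∑ xy : V × V,
          if G.Adj uv.1 uv.2 ∧ G.dist xy.1 uv.1 < G.dist xy.1 uv.2 ∧
            G.dist xy.2 uv.2 < G.dist xy.2 uv.1 then 1 else 0 := by
        rw [Fintype.sum_prod_type]
        simp only [ite_adj_nCloser_mul_nCloser_eq_sum]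
    _ = ∑ xy : V × V, #(G.separatingPairs xy.1 xy.2) := by
        rw [sum_comm]
        simp only [separatingPairs, card_filter]
    _ = ∑ u : V, ∑ v : V, G.dist u v := by
        rw [Fintype.sum_prod_type]
        simp only [hacyc.card_separatingPairs]

/-- The Szeged index equals the Wiener index on trees; both sides are stated as sums over
ordered pairs of vertices, which counts each unordered pair (and each edge) exactly twice. -/
theorem szeged_eq_wiener_of_tree {V : Type*} [Fintype V] (G : SimpleGraph V)
    [DecidableRel G.Adj] (hconn : G.Connected) (hacyc : G.IsAcyclic) :
    (∑ u : V, ∑ v : V, if G.Adj u v then nCloser G u v * nCloser G v u else 0)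
      = ∑ u : V, ∑ v : V, G.dist u v :=
  szeged_eq_wiener_of_tree_general G hacyc
end

section
/- Let k ≥ 2 and n ≥ 1 be natural numbers. Then ∑_{i=1}^{n-1} (k−2)·k^{n−1−i}·(2^i − 2)·k^{i−1}·(k^n − k^{i−1}) = (k−2)·k^{n−2}·( k^n·(2^n − 2) − 2·((2k)^{n−1} − 1)/(2k − 1) − 2(n−1)·k^n + 2·(k^{n−1} − 1)/(k − 1) ), as rational numbers. -/
private lemma aux_sum (m : ℕ) (a b c d x y z : ℚ) :
    ∑ j ∈ Finset.range m, (a * x ^ j + b * y ^ j + c * z ^ j + d)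
      = a * (∑ j ∈ Finset.range m, x ^ j) + b * (∑ j ∈ Finset.range m, y ^ j)
        + c * (∑ j ∈ Finset.range m, z ^ j) + d * m := by
  rw [Finset.sum_add_distrib, Finset.sum_add_distrib, Finset.sum_add_distrib,
    ← Finset.mul_sum, ← Finset.mul_sum, ← Finset.mul_sum, Finset.sum_const,
    Finset.card_range, nsmul_eq_mul]
  ring

theorem nonspecial_contribution_sum (k n : ℕ) (hk : 2 ≤ k) (hn : 1 ≤ n) :
    ∑ i ∈ Finset.Icc 1 (n - 1),
        ((k : ℚ) - 2) * (k : ℚ) ^ (n - 1 - i) * ((2 : ℚ) ^ i - 2) * (k : ℚ) ^ (i - 1)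
          * ((k : ℚ) ^ n - (k : ℚ) ^ (i - 1))
      = ((k : ℚ) - 2) * (k : ℚ) ^ (n - 2) *
          ((k : ℚ) ^ n * ((2 : ℚ) ^ n - 2)
            - 2 * ((2 * (k : ℚ)) ^ (n - 1) - 1) / (2 * (k : ℚ) - 1)
            - 2 * ((n : ℚ) - 1) * (k : ℚ) ^ n
            + 2 * ((k : ℚ) ^ (n - 1) - 1) / ((k : ℚ) - 1)) := by
  have hk2 : (2 : ℚ) ≤ (k : ℚ) := by exact_mod_cast hk
  have hk1 : (k : ℚ) ≠ 1 := by linarith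
  have hk1' : (k : ℚ) - 1 ≠ 0 := by intro h; apply hk1; linarith
  have h2k : (2 * (k : ℚ)) ≠ 1 := by linarith
  have h2k' : 2 * (k : ℚ) - 1 ≠ 0 := by intro h; apply h2k; linarith
  rw [← Finset.Ico_add_one_right_eq_Icc, Finset.sum_Ico_eq_sum_range]
  have hrange : n - 1 + 1 - 1 = n - 1 := by omega
  rw [hrange]
  have step : ∀ j ∈ Finset.range (n - 1),
      ((k : ℚ) - 2) * (k : ℚ) ^ (n - 1 - (1 + j)) * ((2 : ℚ) ^ (1 + j) - 2)
          * (k : ℚ) ^ (1 + j - 1) * ((k : ℚ) ^ n - (k : ℚ) ^ (1 + j - 1))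
        = (((k : ℚ) - 2) * (k : ℚ) ^ (n - 2) * (2 * (k : ℚ) ^ n)) * (2 : ℚ) ^ j
            + (-(((k : ℚ) - 2) * (k : ℚ) ^ (n - 2) * 2)) * (2 * (k : ℚ)) ^ j
            + (((k : ℚ) - 2) * (k : ℚ) ^ (n - 2) * 2) * (k : ℚ) ^ j
            + (-(((k : ℚ) - 2) * (k : ℚ) ^ (n - 2) * (2 * (k : ℚ) ^ n))) := by
    intro j hj
    rw [Finset.mem_range] at hj
    have e2 : 1 + j - 1 = j := by omega
    rw [e2]
    have e3 : (k : ℚ) ^ (n - 1 - (1 + j)) * (k : ℚ) ^ j = (k : ℚ) ^ (n - 2) := by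
      rw [← pow_add]; congr 1; omega
    have e4 : (2 : ℚ) ^ (1 + j) = 2 * 2 ^ j := by rw [pow_add]; ring
    rw [e4, mul_pow]
    linear_combination (((k : ℚ) - 2) * (2 * 2 ^ j - 2) * ((k : ℚ) ^ n - (k : ℚ) ^ j)) * e3
  rw [Finset.sum_congr rfl step, aux_sum, geom_sum_eq (by norm_num : (2:ℚ) ≠ 1),
    geom_sum_eq h2k, geom_sum_eq hk1]
  have hcast : ((n - 1 : ℕ) : ℚ) = (n : ℚ) - 1 := by
    have := Nat.cast_sub hn (R := ℚ); simpa using this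
  have h2n : (2 : ℚ) ^ n = 2 * 2 ^ (n - 1) := by
    rw [← pow_succ']; congr 1; omega
  rw [hcast, h2n]
  field_simp
  ring
end
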